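/- Let (a_1, ..., a_m) be a telescopic sequence of positive integers (so gcd(a_1,...,a_m) = 1) and let S_m be the numerical semigroup it generates. Then the number of gaps of S_m is g(S_m) = (1 + Σ_{i=1}^{m} (d_{i-1}/d_i - 1) a_i)/2, where d_i = gcd(a_1, ..., a_i), d_0 = 0, and the i = 1 term of the sum equals -a_1. In particular, if S_m ≠ ℕ then the largest gap of S_m equals 2·g(S_m) - 1, i.e., telescopic numerical semigroups are symmetric. -/

import Mathlib

/-- `seqGcd a i = d_i = gcd(a_1, …, a_i)` (so `seqGcd a 0 = 0`). -/
def seqGcd (a : ℕ → ℕ) (i : ℕ) : ℕ := Finset.gcd (Finset.Icc 1 i) a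

/-- `seqSemigroup a i = S_i`, the submonoid of `ℕ` generated by `{a_1/d_i, …, a_i/d_i}`. -/
def seqSemigroup (a : ℕ → ℕ) (i : ℕ) : AddSubmonoid ℕ :=
  AddSubmonoid.closure ((fun j => a j / seqGcd a i) '' Set.Icc 1 i)

/-!
Lift everything to `ℤ`, where symmetry of a numerical semigroup `S` with Frobenius number `F`
reads `x ∈ S ↔ F - x ∉ S` for every integer `x`. Then all gaps lie in `[0, F]` and `x ↦ F - x`
pairs the gaps with the elements of `[0, F]`, so `2 g(S) = F + 1`, and `F` is the largest gap.

Put `c = d_i / d_{i+1}` and `b = a_{i+1} / d_{i+1}`. Then `S_{i+1} = c S_i + ℕ b`, where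
`gcd(c, b) = 1` and, by the telescopic condition, `b ∈ S_i`. Every integer is `c y + n b` with
`0 ≤ n < c`, and `c y + n b ∈ S_{i+1} ↔ y ∈ S_i`. So if `S_i` is symmetric about `F_i`, then
`S_{i+1}` is symmetric about `c F_i + (c - 1) b`. Starting from `S_1 = ℕ`, which is symmetric
about `-1`, this recursion gives the stated sum for `F_m`.
-/

lemma Nat.div_eq_div_mul_div_of_dvd {d d' x : ℕ} (hd'd : d' ∣ d) (hdx : d ∣ x) :
    x / d' = d / d' * (x / d) := by
  obtain ⟨k, rfl⟩ := hd'd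
  obtain ⟨l, rfl⟩ := hdx
  rcases Nat.eq_zero_or_pos d' with rfl | hd'
  · simp
  rcases Nat.eq_zero_or_pos k with rfl | hk
  · simp
  rw [Nat.mul_assoc, Nat.mul_div_cancel_left _ hd', Nat.mul_div_cancel_left _ hd',
    ← Nat.mul_assoc, Nat.mul_div_cancel_left _ (Nat.mul_pos hd' hk)]

/-- Applied to the image in `ℤ` of a numerical semigroup, this says that it is symmetric with
Frobenius number `F` (negative integers count as gaps; `F = -1` for `ℕ` itself). -/
def IsSymmetricAbout (M : AddSubmonoid ℤ) (F : ℤ) : Prop := ∀ x, x ∈ M ↔ F - x ∉ M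

def glue {R : Type*} [NonUnitalNonAssocSemiring R] (T : AddSubmonoid R) (c b : R) :
    AddSubmonoid R :=
  T.map (AddMonoidHom.mulLeft c) ⊔ AddSubmonoid.closure {b}

section Glue

variable {T : AddSubmonoid ℤ} {c b : ℤ}

lemma exists_eq_mul_add_mul_of_isCoprime (hc : 0 < c) (hcb : IsCoprime c b) (x : ℤ) :
    ∃ y n, 0 ≤ n ∧ n < c ∧ x = c * y + n * b := by
  obtain ⟨u, v, huv⟩ := hcb
  refine ⟨x * u + x * v / c * b, x * v % c, Int.emod_nonneg _ hc.ne',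
    Int.emod_lt_of_pos _ hc, ?_⟩
  linear_combination (-x) * huv - b * Int.mul_ediv_add_emod (x * v) c

lemma mem_glue_iff (hb : b ∈ T) (hcb : IsCoprime c b) {y n : ℤ} (hn : 0 ≤ n) (hnc : n < c) :
    c * y + n * b ∈ glue T c b ↔ y ∈ T := by
  constructor
  · intro h
    obtain ⟨_, ⟨t, ht, rfl⟩, _, hk, he⟩ := AddSubmonoid.mem_sup.mp h
    obtain ⟨k, rfl⟩ := AddSubmonoid.mem_closure_singleton.mp hk
    simp only [AddMonoidHom.coe_mulLeft, nsmul_eq_mul] at he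
    -- `k ≡ n [ZMOD c]` and `0 ≤ n < c ≤ k + c`, so `k = n + c q` with `q ≥ 0`.
    obtain ⟨q, hq⟩ : c ∣ k - n := hcb.dvd_of_dvd_mul_right ⟨y - t, by linear_combination he⟩
    have hq0 : 0 ≤ q := by nlinarith
    have hy : y = t + q * b :=
      mul_left_cancel₀ (by omega : c ≠ 0) (by linear_combination -he + b * hq)
    lift q to ℕ using hq0
    rw [hy]
    exact add_mem ht (by simpa using T.nsmul_mem hb q)
  · intro hy
    lift n to ℕ using hn
    refine add_mem (AddSubmonoid.mem_sup_left ⟨y, hy, rfl⟩) (AddSubmonoid.mem_sup_right ?_)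
    exact AddSubmonoid.mem_closure_singleton.mpr ⟨n, by simp⟩

lemma IsSymmetricAbout.glue {F : ℤ} (hT : IsSymmetricAbout T F) (hb : b ∈ T)
    (hcb : IsCoprime c b) (hc : 0 < c) :
    IsSymmetricAbout (glue T c b) (c * F + (c - 1) * b) := by
  intro x
  obtain ⟨y, n, hn, hnc, rfl⟩ := exists_eq_mul_add_mul_of_isCoprime hc hcb x
  have hreflect :
      c * F + (c - 1) * b - (c * y + n * b) = c * (F - y) + (c - 1 - n) * b := by ring
  rw [mem_glue_iff hb hcb hn hnc, hreflect, mem_glue_iff hb hcb (by omega) (by omega), hT]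

end Glue

lemma map_natCast_glue (T : AddSubmonoid ℕ) (c b : ℕ) :
    (glue T c b).map (Nat.castAddMonoidHom ℤ) = glue (T.map (Nat.castAddMonoidHom ℤ)) c b := by
  rw [glue, glue, AddSubmonoid.map_sup, AddSubmonoid.map_map, AddSubmonoid.map_map,
    AddMonoidHom.map_mclosure, Set.image_singleton]
  congr 2

lemma isSymmetricAbout_map_top :
    IsSymmetricAbout ((⊤ : AddSubmonoid ℕ).map (Nat.castAddMonoidHom ℤ)) (-1) := by
  intro x
  simp only [AddSubmonoid.mem_map, AddSubmonoid.mem_top, true_and, Nat.coe_castAddMonoidHom]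
  refine ⟨fun ⟨n, hn⟩ ⟨k, hk⟩ => by omega, fun hx => ⟨x.toNat, Int.toNat_of_nonneg ?_⟩⟩
  by_contra! hneg
  exact hx ⟨(-1 - x).toNat, by omega⟩

section NumericalSemigroup

variable {S : AddSubmonoid ℕ} {F : ℤ}

lemma natCast_mem_map_natCast {x : ℕ} :
    (x : ℤ) ∈ S.map (Nat.castAddMonoidHom ℤ) ↔ x ∈ S := by
  simp

lemma nonneg_of_mem_map_natCast {x : ℤ} (hx : x ∈ S.map (Nat.castAddMonoidHom ℤ)) : 0 ≤ x := by
  obtain ⟨n, -, rfl⟩ := hx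
  exact Int.natCast_nonneg n

namespace IsSymmetricAbout

lemma mem_of_lt (h : IsSymmetricAbout (S.map (Nat.castAddMonoidHom ℤ)) F) {x : ℕ}
    (hx : F < x) : x ∈ S := by
  rw [← natCast_mem_map_natCast, h]
  exact fun hF => (nonneg_of_mem_map_natCast hF).not_gt (by omega)

lemma mem_iff_notMem_of_add_eq (h : IsSymmetricAbout (S.map (Nat.castAddMonoidHom ℤ)) F)
    {x y : ℕ} (hxy : (x : ℤ) + y = F) : x ∈ S ↔ y ∉ S := by
  rw [← natCast_mem_map_natCast, h, show F - x = y by omega, natCast_mem_map_natCast]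

lemma neg_one_le (h : IsSymmetricAbout (S.map (Nat.castAddMonoidHom ℤ)) F) : -1 ≤ F := by
  by_contra hF
  have := nonneg_of_mem_map_natCast ((h (F + 1)).mpr fun hm => ?_)
  · omega
  · exact (nonneg_of_mem_map_natCast hm).not_gt (by omega)

lemma two_mul_ncard_gaps (h : IsSymmetricAbout (S.map (Nat.castAddMonoidHom ℤ)) F) :
    2 * ({x : ℕ | x ∉ S}.ncard : ℤ) = F + 1 := by
  classical
  obtain ⟨N, hN⟩ : ∃ N : ℕ, (N : ℤ) = F + 1 := ⟨(F + 1).toNat, by have := h.neg_one_le; omega⟩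
  have hgaps : {x : ℕ | x ∉ S} = ↑((Finset.range N).filter (· ∉ S)) := by
    ext x
    simp only [Finset.coe_filter, Finset.mem_range]
    exact ⟨fun hx => ⟨by_contra fun hxN => hx (h.mem_of_lt (by omega)), hx⟩, And.right⟩
  have hreflect :
      ((Finset.range N).filter (· ∉ S)).card = ((Finset.range N).filter (· ∈ S)).card := by
    refine Finset.card_nbij' (fun x => N - 1 - x) (fun x => N - 1 - x) ?_ ?_ ?_ ?_
    all_goals
      intro x hx
      simp only [Finset.coe_filter, Finset.mem_range, Set.mem_ofPred] at hx ⊢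
    · exact ⟨by omega, (h.mem_iff_notMem_of_add_eq (y := x) (by omega)).mpr hx.2⟩
    · exact ⟨by omega, (h.mem_iff_notMem_of_add_eq (x := x) (by omega)).mp hx.2⟩
    all_goals omega
  have hsplit := Finset.card_filter_add_card_filter_not (s := Finset.range N) (· ∈ S)
  rw [Finset.card_range] at hsplit
  rw [hgaps, Set.ncard_coe_finset]
  omega

lemma exists_isGreatest_gaps (h : IsSymmetricAbout (S.map (Nat.castAddMonoidHom ℤ)) F)
    (hS : S ≠ ⊤) : ∃ l : ℕ, (l : ℤ) = F ∧ IsGreatest {x : ℕ | x ∉ S} l := by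
  obtain ⟨x, hx⟩ : ∃ x, x ∉ S := by
    by_contra! hall
    exact hS (eq_top_iff.mpr fun x _ => hall x)
  have hxF : (x : ℤ) ≤ F := not_lt.mp fun hFx => hx (h.mem_of_lt hFx)
  lift F to ℕ using by omega with l
  refine ⟨l, rfl, (h.mem_iff_notMem_of_add_eq (y := 0) (by simp)).not.mpr ?_, fun y hy => ?_⟩
  · simp
  · exact not_lt.mp fun hly => hy (h.mem_of_lt (by exact_mod_cast hly))

end IsSymmetricAbout

end NumericalSemigroup

section Telescopic

variable (a : ℕ → ℕ)

def seqFrobenius (i : ℕ) : ℤ :=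
  ∑ j ∈ Finset.Icc 1 i,
    ((seqGcd a (j - 1) : ℤ) / (seqGcd a j : ℤ) - 1) * ((a j / seqGcd a i : ℕ) : ℤ)

lemma seqGcd_zero : seqGcd a 0 = 0 := by
  simp [seqGcd]

lemma seqGcd_succ (i : ℕ) : seqGcd a (i + 1) = Nat.gcd (a (i + 1)) (seqGcd a i) := by
  rw [seqGcd, ← Finset.insert_Icc_right_eq_Icc_add_one (by omega), Finset.gcd_insert]
  rfl

lemma seqGcd_one : seqGcd a 1 = a 1 := by
  rw [seqGcd_succ, seqGcd_zero, Nat.gcd_zero_right]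

lemma seqGcd_dvd {i j : ℕ} (h1 : 1 ≤ j) (h2 : j ≤ i) : seqGcd a i ∣ a j :=
  Finset.gcd_dvd (Finset.mem_Icc.mpr ⟨h1, h2⟩)

lemma seqGcd_succ_dvd (i : ℕ) : seqGcd a (i + 1) ∣ seqGcd a i := by
  rw [seqGcd_succ]
  exact Nat.gcd_dvd_right _ _

lemma seqSemigroup_succ (i : ℕ) :
    seqSemigroup a (i + 1) =
      glue (seqSemigroup a i) (seqGcd a i / seqGcd a (i + 1)) (a (i + 1) / seqGcd a (i + 1)) := by
  rw [seqSemigroup, seqSemigroup, glue, AddMonoidHom.map_mclosure, ← AddSubmonoid.closure_union,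
    ← Set.insert_Icc_right_eq_Icc_add_one (by omega), Set.image_insert_eq, Set.image_image,
    Set.union_singleton]
  congr 2
  refine Set.image_congr fun j hj => ?_
  simp only [AddMonoidHom.coe_mulLeft]
  exact Nat.div_eq_div_mul_div_of_dvd (seqGcd_succ_dvd a i) (seqGcd_dvd a hj.1 hj.2)

lemma seqFrobenius_succ (i : ℕ) :
    seqFrobenius a (i + 1) =
      ((seqGcd a i / seqGcd a (i + 1) : ℕ) : ℤ) * seqFrobenius a i +
        ((seqGcd a i / seqGcd a (i + 1) : ℕ) - 1) * (a (i + 1) / seqGcd a (i + 1) : ℕ) := by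
  rw [seqFrobenius, seqFrobenius, Finset.sum_Icc_succ_top (by omega), Nat.add_sub_cancel,
    ← Int.natCast_div, Finset.mul_sum]
  congr 1
  refine Finset.sum_congr rfl fun j hj => ?_
  obtain ⟨hj1, hji⟩ := Finset.mem_Icc.mp hj
  rw [Nat.div_eq_div_mul_div_of_dvd (seqGcd_succ_dvd a i) (seqGcd_dvd a hj1 hji), Nat.cast_mul]
  ring

variable {a}

lemma seqGcd_pos (ha : 0 < a 1) {i : ℕ} (hi : 1 ≤ i) : 0 < seqGcd a i :=
  Nat.pos_of_dvd_of_pos (seqGcd_dvd a le_rfl hi) ha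

lemma coprime_seqGcd_div_seqGcd_succ {i : ℕ} (h : 0 < seqGcd a (i + 1)) :
    Nat.Coprime (seqGcd a i / seqGcd a (i + 1)) (a (i + 1) / seqGcd a (i + 1)) := by
  have := Nat.coprime_div_gcd_div_gcd (m := seqGcd a i) (n := a (i + 1))
    (by rwa [Nat.gcd_comm, ← seqGcd_succ])
  rwa [Nat.gcd_comm, ← seqGcd_succ] at this

lemma seqSemigroup_one (ha : 0 < a 1) : seqSemigroup a 1 = ⊤ := by
  rw [seqSemigroup, Set.Icc_self, Set.image_singleton, seqGcd_one, Nat.div_self ha, eq_top_iff]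
  exact fun x _ => AddSubmonoid.mem_closure_singleton.mpr ⟨x, by simp⟩

lemma seqFrobenius_one (ha : 0 < a 1) : seqFrobenius a 1 = -1 := by
  simp [seqFrobenius, seqGcd_zero, seqGcd_one, ha.ne']

theorem isSymmetricAbout_seqFrobenius {m : ℕ} (ha : 0 < a 1)
    (htel : ∀ i, 2 ≤ i → i ≤ m → a i / seqGcd a i ∈ seqSemigroup a (i - 1))
    {i : ℕ} (hi : 1 ≤ i) (him : i ≤ m) :
    IsSymmetricAbout ((seqSemigroup a i).map (Nat.castAddMonoidHom ℤ)) (seqFrobenius a i) := by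
  induction i, hi using Nat.le_induction with
  | base => rw [seqSemigroup_one ha, seqFrobenius_one ha]; exact isSymmetricAbout_map_top
  | succ i hi ih =>
    have hd : 0 < seqGcd a i := seqGcd_pos ha hi
    have hd' : 0 < seqGcd a (i + 1) := seqGcd_pos ha (by omega)
    have hc : 0 < seqGcd a i / seqGcd a (i + 1) :=
      Nat.div_pos (Nat.le_of_dvd hd (seqGcd_succ_dvd a i)) hd'
    rw [seqSemigroup_succ, map_natCast_glue, seqFrobenius_succ]
    refine (ih (by omega)).glue ?_ (Nat.isCoprime_iff_coprime.mpr
      (coprime_seqGcd_div_seqGcd_succ hd')) (by exact_mod_cast hc)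
    exact natCast_mem_map_natCast.mpr (htel (i + 1) (by omega) him)

end Telescopic

/-- Lemma 2.2 (Kirfel–Pellikaan, Lemma 6.5), genus part: for a telescopic sequence
`(a_1, …, a_m)` generating `S_m`, the number of gaps satisfies
`2·g(S_m) = 1 + Σ_{i=1}^m (d_{i-1}/d_i - 1)·a_i` (the `i = 1` term being `-a_1`);
in particular if `S_m ≠ ℕ` the largest gap equals `2·g(S_m) - 1`, i.e. telescopic
numerical semigroups are symmetric. -/
theorem telescopic_genus_and_symmetric
    (m : ℕ) (hm : 1 ≤ m) (a : ℕ → ℕ)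
    (hpos : ∀ i, 1 ≤ i → i ≤ m → 0 < a i)
    (hgcd : seqGcd a m = 1)
    (htel : ∀ i, 2 ≤ i → i ≤ m → a i / seqGcd a i ∈ seqSemigroup a (i - 1)) :
    (2 * (Set.ncard {x : ℕ | x ∉ seqSemigroup a m} : ℤ) =
      1 + ∑ i ∈ Finset.Icc 1 m,
        ((seqGcd a (i - 1) : ℤ) / (seqGcd a i : ℤ) - 1) * (a i : ℤ)) ∧
    (seqSemigroup a m ≠ ⊤ →
      ∃ l : ℕ, IsGreatest {x : ℕ | x ∉ seqSemigroup a m} l ∧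
        (l : ℤ) = 2 * (Set.ncard {x : ℕ | x ∉ seqSemigroup a m} : ℤ) - 1) := by
  have hsym := isSymmetricAbout_seqFrobenius (hpos 1 le_rfl hm) htel hm le_rfl
  have hF : seqFrobenius a m =
      ∑ i ∈ Finset.Icc 1 m, ((seqGcd a (i - 1) : ℤ) / (seqGcd a i : ℤ) - 1) * (a i : ℤ) := by
    simp [seqFrobenius, hgcd]
  have hgenus := hsym.two_mul_ncard_gaps
  refine ⟨by rw [hgenus, hF, add_comm], fun hS => ?_⟩
  obtain ⟨l, hl, hgreatest⟩ := hsym.exists_isGreatest_gaps hS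
  exact ⟨l, hgreatest, by rw [hgenus, hl, add_sub_cancel_right]⟩
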